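/- The number of committees fixed by an element (σ; π) ∈ S_m ≀ S_n equals the product, over a set of representatives i of the orbits of π on Fin n, of the number of fixed points in Fin m of the cycle product g_{ν_i} = σ_i σ_{π⁻¹(i)} ⋯ σ_{π^{-ℓ_i+1}(i)}, where ℓ_i is the orbit size of i under π. -/

import Mathlib

/-- The cycle product `g_{ν_i} = σ_i σ_{π⁻¹(i)} ⋯ σ_{π^{-(ℓ-1)}(i)} ∈ S_m`. -/
def cycleProd {m n : ℕ} (σ : Fin n → Equiv.Perm (Fin m)) (π : Equiv.Perm (Fin n))
    (i : Fin n) (ℓ : ℕ) : Equiv.Perm (Fin m) :=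
  ((List.range ℓ).map fun t => σ ((π ^ t)⁻¹ i)).prod

/-! A fixed committee satisfies `c (π i) = σ_{π i} (c i)`, so along the cycle of a representative
`j` it is determined by `k = c j`: its value `t` steps past `j` is the product of the `t` σ's
met on the way, applied to `k`. Conversely such a `k` extends to a well-defined fixed committee
on the cycle iff going once around it, `ℓ_j` steps, brings `k` back to itself, i.e. iff `k` is
a fixed point of `g_{ν_j}`. Thus fixed committees correspond to families of fixed points, one
for each cycle. -/

open Equiv Function

theorem Equiv.Perm.pow_minimalPeriod_apply {α : Type*} (π : Perm α) (x : α) :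
    (π ^ minimalPeriod π x) x = x := by
  rw [← Perm.iterate_eq_pow, iterate_minimalPeriod]

section CycleRepresentatives

variable {α : Type*} {π : Perm α} {s : Finset α} (hs : ∀ i, ∃! j, j ∈ s ∧ π.SameCycle j i)

noncomputable def cycleRep (i : α) : s :=
  ⟨(hs i).exists.choose, (hs i).exists.choose_spec.1⟩

theorem sameCycle_cycleRep (i : α) : π.SameCycle (cycleRep hs i) i :=
  (hs i).exists.choose_spec.2

theorem cycleRep_eq_of_sameCycle {i i' : α} (h : π.SameCycle i i') :
    cycleRep hs i = cycleRep hs i' :=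
  Subtype.ext <| (hs i').unique ⟨(cycleRep hs i).2, (sameCycle_cycleRep hs i).trans h⟩
    ⟨(cycleRep hs i').2, sameCycle_cycleRep hs i'⟩

theorem cycleRep_coe (j : s) : cycleRep hs j = j :=
  Subtype.ext <| (hs j).unique ⟨(cycleRep hs j).2, sameCycle_cycleRep hs j⟩ ⟨j.2, .refl π j⟩

theorem exists_pow_inv_apply_eq_cycleRep [Finite α] (i : α) :
    ∃ t : ℕ, (π ^ t)⁻¹ i = cycleRep hs i := by
  obtain ⟨t, ht⟩ := (sameCycle_cycleRep hs i).exists_nat_pow_eq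
  exact ⟨t, Perm.inv_eq_iff_eq.2 ht.symm⟩

/-- Some number of `π`-steps from the representative of `i` to `i`; which one is irrelevant by
`cycleProd_apply_congr`. -/
noncomputable def cycleRepDist [Finite α] (i : α) : ℕ :=
  (exists_pow_inv_apply_eq_cycleRep hs i).choose

theorem pow_cycleRepDist_inv_apply [Finite α] (i : α) :
    (π ^ cycleRepDist hs i)⁻¹ i = cycleRep hs i :=
  (exists_pow_inv_apply_eq_cycleRep hs i).choose_spec

end CycleRepresentatives

section CycleProd

variable {m n : ℕ} (σ : Fin n → Perm (Fin m)) (π : Perm (Fin n))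

theorem cycleProd_add (i : Fin n) (a b : ℕ) :
    cycleProd σ π i (a + b) = cycleProd σ π i a * cycleProd σ π ((π ^ a)⁻¹ i) b := by
  unfold cycleProd
  rw [List.range_add, List.map_append, List.prod_append, List.map_map]
  congr 3
  funext u
  simp only [comp_apply, pow_add, mul_inv_rev, Perm.mul_apply]

theorem cycleProd_one_add (i : Fin n) (t : ℕ) :
    cycleProd σ π i (1 + t) = σ i * cycleProd σ π (π⁻¹ i) t := by
  rw [cycleProd_add, pow_one]
  simp only [cycleProd, List.range_one, List.map_singleton, List.prod_singleton, pow_zero, inv_one,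
    Perm.one_apply]

theorem cycleProd_mul_of_pow_apply_eq_self {j : Fin n} {ℓ : ℕ} (h : (π ^ ℓ) j = j) (q : ℕ) :
    cycleProd σ π j (ℓ * q) = cycleProd σ π j ℓ ^ q := by
  induction q with
  | zero => rfl
  | succ q ih =>
    have hq : (π ^ (ℓ * q))⁻¹ j = j := by
      rw [Perm.inv_eq_iff_eq, pow_mul, Perm.pow_apply_eq_self_of_apply_eq_self h q]
    rw [mul_add_one, cycleProd_add, ih, hq, pow_succ]

theorem cycleProd_apply_congr {i j : Fin n} {k : Fin m}
    (hk : cycleProd σ π j (minimalPeriod π j) k = k) {a b : ℕ}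
    (ha : (π ^ a)⁻¹ i = j) (hb : (π ^ b)⁻¹ i = j) :
    cycleProd σ π i a k = cycleProd σ π i b k := by
  wlog hab : a ≤ b generalizing a b
  · exact (this hb ha (le_of_not_ge hab)).symm
  obtain ⟨d, rfl⟩ := Nat.exists_eq_add_of_le hab
  have hd : IsPeriodicPt π d j := by
    rw [pow_add, mul_inv_rev, Perm.mul_apply, ha, Perm.inv_eq_iff_eq] at hb
    rw [IsPeriodicPt, IsFixedPt, Perm.iterate_eq_pow]
    exact hb.symm
  obtain ⟨q, rfl⟩ := hd.minimalPeriod_dvd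
  rw [cycleProd_add, ha, Perm.mul_apply,
    cycleProd_mul_of_pow_apply_eq_self σ π (π.pow_minimalPeriod_apply j),
    Perm.pow_apply_eq_self_of_apply_eq_self hk]

theorem cycleProd_apply_of_fixed {c : Fin n → Fin m} (hc : ∀ i, σ i (c (π⁻¹ i)) = c i)
    (t : ℕ) (i : Fin n) : cycleProd σ π i t (c ((π ^ t)⁻¹ i)) = c i := by
  induction t generalizing i with
  | zero => rfl
  | succ t ih =>
    rw [add_comm, cycleProd_one_add, pow_add, mul_inv_rev, pow_one, Perm.mul_apply,
      Perm.mul_apply, ih, hc]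

noncomputable def fixedCommitteesEquiv {s : Finset (Fin n)}
    (hs : ∀ i, ∃! j, j ∈ s ∧ π.SameCycle j i) :
    {c : Fin n → Fin m // ∀ i, σ i (c (π⁻¹ i)) = c i} ≃
      Π j : s, {k : Fin m // cycleProd σ π j (minimalPeriod π j) k = k} where
  toFun c j := ⟨c.1 j, by
    simpa only [Perm.inv_eq_iff_eq.2 (π.pow_minimalPeriod_apply j).symm] using
      cycleProd_apply_of_fixed σ π c.2 (minimalPeriod π j) j⟩
  invFun k := ⟨fun i => cycleProd σ π i (cycleRepDist hs i) (k (cycleRep hs i)), fun i => by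
    have hrep : cycleRep hs (π⁻¹ i) = cycleRep hs i :=
      cycleRep_eq_of_sameCycle hs (Perm.sameCycle_symm_apply_left.2 (.refl π i))
    have hdist : (π ^ (1 + cycleRepDist hs (π⁻¹ i)))⁻¹ i = cycleRep hs i := by
      rw [pow_add, mul_inv_rev, Perm.mul_apply, pow_one, pow_cycleRepDist_inv_apply, hrep]
    dsimp only
    rw [hrep, ← Perm.mul_apply, ← cycleProd_one_add]
    exact cycleProd_apply_congr σ π (k _).2 hdist (pow_cycleRepDist_inv_apply hs i)⟩
  left_inv c := Subtype.ext <| funext fun i => by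
    dsimp only
    rw [← pow_cycleRepDist_inv_apply hs i]
    exact cycleProd_apply_of_fixed σ π c.2 _ i
  right_inv k := funext fun j => Subtype.ext <| by
    have hdist : (π ^ cycleRepDist hs j)⁻¹ j = j :=
      (pow_cycleRepDist_inv_apply hs j).trans (congrArg Subtype.val (cycleRep_coe hs j))
    dsimp only
    rw [cycleRep_coe hs j]
    exact cycleProd_apply_congr σ π (k j).2 hdist (b := 0) (by simp)

end CycleProd

/-- The number of committees fixed by `(σ; π) ∈ S_m ≀ S_n` equals the product,
over a set `s` of representatives of the orbits (cycles) of `π` on `Fin n`, of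
the number of fixed points in `Fin m` of the cycle product `g_{ν_i}`, where
`ℓ_i` is the orbit size (minimal period) of `i` under `π`. -/
theorem card_fixed_committees_eq_prod {m n : ℕ}
    (σ : Fin n → Equiv.Perm (Fin m)) (π : Equiv.Perm (Fin n))
    (s : Finset (Fin n)) (hs : ∀ i : Fin n, ∃! j, j ∈ s ∧ π.SameCycle j i) :
    Fintype.card {c : Fin n → Fin m // ∀ i, σ i (c (π⁻¹ i)) = c i} =
      ∏ j ∈ s,
        Fintype.card {k : Fin m // cycleProd σ π j (Function.minimalPeriod (⇑π) j) k = k} := by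
  rw [Fintype.card_congr (fixedCommitteesEquiv σ π hs), Fintype.card_pi]
  exact Finset.prod_coe_sort s fun j =>
    Fintype.card {k : Fin m // cycleProd σ π j (minimalPeriod π j) k = k}
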